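/- arXiv:math/0408190 — 2 statements merged into one kernel-verified Lean document; each statement's English description precedes it below -/
import Mathlib

section
/- Let E be a topological graph, v ∈ E⁰, and e a negative orbit of v. Then the orbit space Orb(v, e) = ⋃_{v' ∈ Orb⁻(v,e)} Orb⁺(v') is an invariant subset of E⁰ (both positively and negatively invariant). -/
open Set Topology

variable {E0 E1 : Type*} [TopologicalSpace E0] [TopologicalSpace E1]

/-- A set is positively invariant if the range of every edge with domain in it lies in it. -/
def PosInv (d r : E1 → E0) (X : Set E0) : Prop := ∀ e : E1, d e ∈ X → r e ∈ X

/-- Sources: `E⁰ \ closure (r (E¹))`. -/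
def Sce (r : E1 → E0) : Set E0 := (closure (Set.range r))ᶜ

/-- Vertices having a neighborhood with compact `r`-preimage. -/
def FinSet (r : E1 → E0) : Set E0 := {v | ∃ V ∈ 𝓝 v, IsCompact (r ⁻¹' V)}

/-- Regular vertices. -/
def Rg (r : E1 → E0) : Set E0 := FinSet r \ closure (Sce r)

/-- Singular vertices. -/
def Sg (r : E1 → E0) : Set E0 := (Rg r)ᶜ

/-- A set is negatively invariant if every regular vertex in it receives an edge from it. -/
def NegInv (d r : E1 → E0) (X : Set E0) : Prop :=
  ∀ v ∈ X ∩ Rg r, ∃ e : E1, r e = v ∧ d e ∈ X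

/-- Invariant = positively and negatively invariant. -/
def Invariant (d r : E1 → E0) (X : Set E0) : Prop := PosInv d r X ∧ NegInv d r X

/-- The chain condition for a finite path `(e 0, e 1, …, e n)` of edges:
`d (e k) = r (e (k+1))`. -/
def IsPath (d r : E1 → E0) {n : ℕ} (e : Fin (n + 1) → E1) : Prop :=
  ∀ i : Fin n, d (e i.castSucc) = r (e i.succ)

/-- The positive orbit `Orb⁺(v)`: ranges of finite paths with domain `v`. -/
def OrbPlus (d r : E1 → E0) (v : E0) : Set E0 :=
  {v} ∪ {w | ∃ n : ℕ, ∃ e : Fin (n + 1) → E1,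
    IsPath d r e ∧ d (e (Fin.last n)) = v ∧ r (e 0) = w}

/-- An infinite path of edges. -/
def IsInfPath (d r : E1 → E0) (e : ℕ → E1) : Prop := ∀ k : ℕ, d (e k) = r (e (k + 1))

/-- `S` is the negative orbit space `Orb⁻(v, e)` of some negative orbit `e` of `v`:
either `v` itself (when `v` is singular), or a finite path ending at a singular vertex
with range `v`, or an infinite path with range `v`. -/
def IsNegOrbitSet (d r : E1 → E0) (v : E0) (S : Set E0) : Prop :=
  (v ∈ Sg r ∧ S = {v}) ∨
  (∃ n : ℕ, ∃ e : Fin (n + 1) → E1, IsPath d r e ∧ r (e 0) = v ∧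
    d (e (Fin.last n)) ∈ Sg r ∧ S = insert v (Set.range (d ∘ e))) ∨
  (∃ e : ℕ → E1, IsInfPath d r e ∧ r (e 0) = v ∧ S = insert v (Set.range (d ∘ e)))

/-- The orbit space `Orb(v, e) = ⋃_{v' ∈ Orb⁻(v,e)} Orb⁺(v')`, expressed in terms of the
negative orbit space `S = Orb⁻(v, e)`. -/
def Orb (d r : E1 → E0) (S : Set E0) : Set E0 := ⋃ v ∈ S, OrbPlus d r v

/-- A maximal head: a non-empty closed invariant set in which any two points can be
approximated by the positive orbit of a common vertex. -/
def MaximalHead (d r : E1 → E0) (X : Set E0) : Prop :=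
  X.Nonempty ∧ IsClosed X ∧ Invariant d r X ∧
  ∀ v1 ∈ X, ∀ v2 ∈ X, ∀ V1 ∈ 𝓝 v1, ∀ V2 ∈ 𝓝 v2,
    ∃ w ∈ X, (OrbPlus d r w ∩ V1).Nonempty ∧ (OrbPlus d r w ∩ V2).Nonempty

/-- Hereditary set: `d (r⁻¹ (V)) ⊆ V`. -/
def Hereditary (d r : E1 → E0) (V : Set E0) : Prop := d '' (r ⁻¹' V) ⊆ V

/-- Saturated set: every regular vertex all of whose received edges have domain in `V`
belongs to `V`. -/
def Saturated (d r : E1 → E0) (V : Set E0) : Prop :=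
  ∀ v ∈ Rg r, d '' (r ⁻¹' {v}) ⊆ V → v ∈ V

/-- `H(V) = ⋃ₙ dⁿ ((rⁿ)⁻¹ (V))`. -/
def HSet (d r : E1 → E0) (V : Set E0) : Set E0 :=
  V ∪ {w | ∃ n : ℕ, ∃ e : Fin (n + 1) → E1,
    IsPath d r e ∧ r (e 0) ∈ V ∧ d (e (Fin.last n)) = w}

/-- The sequence `V₀ = V`, `V_{k+1} = V_k ∪ {v ∈ E⁰_rg : d (r⁻¹ (v)) ⊆ V_k}`. -/
def SatSeq (d r : E1 → E0) (V : Set E0) : ℕ → Set E0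
  | 0 => V
  | k + 1 => SatSeq d r V k ∪ {v | v ∈ Rg r ∧ d '' (r ⁻¹' {v}) ⊆ SatSeq d r V k}

/-- The saturation `S(V) = ⋃ₖ V_k`. -/
def SatSet (d r : E1 → E0) (V : Set E0) : Set E0 := ⋃ k, SatSeq d r V k

/-- Sources of the subgraph on a closed positively invariant set `X`, viewed in `E⁰`:
`X⁰_sce = X⁰ \ closure_{X⁰} (r (X¹))` where `X¹ = d⁻¹ (X⁰)`. -/
def SceIn (d r : E1 → E0) (X : Set E0) : Set E0 := X \ closure (r '' (d ⁻¹' X))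

/-- Vertices of the subgraph on `X` having a relative neighborhood with compact
`r`-preimage in `X¹ = d⁻¹(X⁰)`. -/
def FinIn (d r : E1 → E0) (X : Set E0) : Set E0 :=
  {v | v ∈ X ∧ ∃ V ∈ 𝓝 v, IsCompact (r ⁻¹' (V ∩ X) ∩ d ⁻¹' X)}

/-- Infinite receivers of the subgraph on `X`. -/
def InfIn (d r : E1 → E0) (X : Set E0) : Set E0 := X \ FinIn d r X

/-- Regular vertices of the subgraph on `X`. -/
def RgIn (d r : E1 → E0) (X : Set E0) : Set E0 := FinIn d r X \ closure (SceIn d r X)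

/-- Singular vertices of the subgraph on `X`. -/
def SgIn (d r : E1 → E0) (X : Set E0) : Set E0 := X \ RgIn d r X

/-!
Every vertex of `Orb⁺(w)` other than `w` receives an edge whose domain is again in `Orb⁺(w)`
(the first edge of a path from `w`), and every regular vertex of a negative orbit receives the
next edge of that orbit; the orbit only stops at a singular vertex. Positive invariance holds
because prepending an edge to a path from `w` gives another path from `w`.
-/

variable {V E : Type*} {d r : E → V}

theorem IsPath.cons {n : ℕ} {p : Fin (n + 1) → E} (hp : IsPath d r p) {f : E}
    (hf : d f = r (p 0)) : IsPath d r (Fin.cons f p : Fin (n + 2) → E) := by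
  intro i
  induction i using Fin.cases with
  | zero => simpa using hf
  | succ j => simpa [← Fin.succ_castSucc] using hp j

theorem IsPath.tail {n : ℕ} {p : Fin (n + 2) → E} (hp : IsPath d r p) :
    IsPath d r (Fin.tail p) := fun i => by
  simpa only [Fin.tail, Fin.succ_castSucc] using hp i.succ

theorem posInv_orbPlus (w : V) : PosInv d r (OrbPlus d r w) := by
  rintro f (hf | ⟨n, p, hp, hlast, h0⟩)
  · exact Or.inr ⟨0, fun _ => f, fun i => i.elim0, hf, rfl⟩
  · exact Or.inr ⟨n + 1, Fin.cons f p, hp.cons h0.symm, by simpa [Fin.cons_last] using hlast,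
      congrArg r (Fin.cons_zero _ _)⟩

theorem eq_or_exists_edge_of_mem_orbPlus {w v' : V} (hv' : v' ∈ OrbPlus d r w) :
    v' = w ∨ ∃ f, r f = v' ∧ d f ∈ OrbPlus d r w := by
  rcases hv' with hv' | ⟨n, p, hp, hlast, h0⟩
  · exact Or.inl hv'
  refine Or.inr ⟨p 0, h0, ?_⟩
  cases n with
  | zero => exact Or.inl hlast
  | succ m => exact Or.inr ⟨m, Fin.tail p, hp.tail, hlast, (hp 0).symm⟩

theorem subset_orb (S : Set V) : S ⊆ Orb d r S :=
  fun _ hw => mem_biUnion hw (Or.inl rfl)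

theorem posInv_orb (S : Set V) : PosInv d r (Orb d r S) := by
  intro f hf
  obtain ⟨w, hw, hfw⟩ := mem_iUnion₂.mp hf
  exact mem_biUnion hw (posInv_orbPlus w f hfw)

theorem NegInv.orb [TopologicalSpace V] [TopologicalSpace E] {S : Set V} (hS : NegInv d r S) : NegInv d r (Orb d r S) := by
  rintro v' ⟨hv'O, hv'Rg⟩
  obtain ⟨w, hw, hv'w⟩ := mem_iUnion₂.mp hv'O
  rcases eq_or_exists_edge_of_mem_orbPlus hv'w with rfl | ⟨f, hf, hdf⟩
  · obtain ⟨f, hf, hdf⟩ := hS v' ⟨hw, hv'Rg⟩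
    exact ⟨f, hf, subset_orb S hdf⟩
  · exact ⟨f, hf, mem_biUnion hw hdf⟩

theorem negInv_insert_range_of_isPath [TopologicalSpace V] [TopologicalSpace E] {n : ℕ} {e : Fin (n + 1) → E} (hp : IsPath d r e)
    (hsg : d (e (Fin.last n)) ∈ Sg r) :
    NegInv d r (insert (r (e 0)) (range (d ∘ e))) := by
  rintro v' ⟨rfl | ⟨i, rfl⟩, hv'Rg⟩
  · exact ⟨e 0, rfl, mem_insert_of_mem _ ⟨0, rfl⟩⟩
  rcases Fin.eq_castSucc_or_eq_last i with ⟨j, rfl⟩ | rfl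
  · exact ⟨e j.succ, (hp j).symm, mem_insert_of_mem _ ⟨j.succ, rfl⟩⟩
  · exact absurd hv'Rg hsg

theorem negInv_insert_range_of_isInfPath [TopologicalSpace V] [TopologicalSpace E] {e : ℕ → E} (hp : IsInfPath d r e) :
    NegInv d r (insert (r (e 0)) (range (d ∘ e))) := by
  rintro v' ⟨rfl | ⟨k, rfl⟩, -⟩
  · exact ⟨e 0, rfl, mem_insert_of_mem _ ⟨0, rfl⟩⟩
  · exact ⟨e (k + 1), (hp k).symm, mem_insert_of_mem _ ⟨k + 1, rfl⟩⟩

theorem IsNegOrbitSet.negInv [TopologicalSpace V] [TopologicalSpace E] {v : V} {S : Set V} (hS : IsNegOrbitSet d r v S) :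
    NegInv d r S := by
  rcases hS with ⟨hsg, rfl⟩ | ⟨n, e, hp, rfl, hsg, rfl⟩ | ⟨e, hp, rfl, rfl⟩
  · rintro v' ⟨rfl, hRg⟩
    exact absurd hRg hsg
  · exact negInv_insert_range_of_isPath hp hsg
  · exact negInv_insert_range_of_isInfPath hp

theorem stmt7_general (d r : E1 → E0) (v : E0) (S : Set E0) (hS : IsNegOrbitSet d r v S) :
    Invariant d r (Orb d r S) :=
  ⟨posInv_orb S, hS.negInv.orb⟩

theorem stmt7 [LocallyCompactSpace E0] [T2Space E0] [LocallyCompactSpace E1] [T2Space E1]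
    (d r : E1 → E0) (hd : IsLocalHomeomorph d) (hr : Continuous r)
    (v : E0) (S : Set E0) (hS : IsNegOrbitSet d r v S) :
    Invariant d r (Orb d r S) :=
  stmt7_general d r v S hS
end

section
/- Let E be a topological graph and V an open subset of E⁰. Then X = E⁰ \ S(H(V)) is the largest invariant set disjoint from V: X is closed, invariant, X ∩ V = ∅, and every invariant set disjoint from V is contained in X. -/
open Set Topology

variable {E0 E1 : Type*} [TopologicalSpace E0] [TopologicalSpace E1]

section Aux

variable (d r : E1 → E0) (V : Set E0)

/-- The inductively defined hereditary closure sequence. -/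
def WSeq : ℕ → Set E0
  | 0 => V
  | n + 1 => d '' (r ⁻¹' WSeq n)

variable {d r V}

lemma isPath_castSucc {n : ℕ} {e : Fin (n + 2) → E1} (he : IsPath d r e) :
    IsPath d r (e ∘ Fin.castSucc) := by
  intro i
  have h := he i.castSucc
  simpa [Function.comp, ← Fin.succ_castSucc] using h

lemma hset_extend {x : E0} (hx : x ∈ HSet d r V) (f : E1) (hf : r f = x) :
    d f ∈ HSet d r V := by
  rcases hx with hx | ⟨n, e, he, h0, hl⟩
  · refine Or.inr ⟨0, fun _ => f, fun i => i.elim0, by rwa [hf], rfl⟩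
  · refine Or.inr ⟨n + 1, Fin.snoc e f, ?_, ?_, ?_⟩
    · intro i
      refine Fin.lastCases ?_ (fun j => ?_) i
      · rw [Fin.snoc_castSucc, Fin.succ_last, Fin.snoc_last, hl, hf]
      · rw [Fin.snoc_castSucc, Fin.succ_castSucc, Fin.snoc_castSucc]
        exact he j
    · have : ((0 : Fin (n + 2))) = (0 : Fin (n + 1)).castSucc := by simp
      rw [this, Fin.snoc_castSucc]; exact h0
    · rw [Fin.snoc_last]

lemma wseq_subset_hset : ∀ n, WSeq d r V n ⊆ HSet d r V
  | 0 => fun x hx => Or.inl hx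
  | n + 1 => by
      rintro w ⟨f, hf, rfl⟩
      exact hset_extend (wseq_subset_hset n hf) f rfl

lemma path_mem_wseq : ∀ n (e : Fin (n + 1) → E1), IsPath d r e → r (e 0) ∈ V →
    d (e (Fin.last n)) ∈ WSeq d r V (n + 1) := by
  intro n
  induction n with
  | zero => intro e _ h0; exact ⟨e 0, h0, rfl⟩
  | succ n ih =>
    intro e he h0
    refine ⟨e (Fin.last (n + 1)), ?_, rfl⟩
    have h2 : d (e (Fin.last n).castSucc) ∈ WSeq d r V (n + 1) :=
      ih (e ∘ Fin.castSucc) (isPath_castSucc he) (by simpa using h0)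
    show r (e (Fin.last (n + 1))) ∈ WSeq d r V (n + 1)
    rw [← Fin.succ_last, ← he (Fin.last n)]
    exact h2

lemma hset_eq_iUnion : HSet d r V = ⋃ n, WSeq d r V n := by
  ext w
  constructor
  · rintro (hw | ⟨n, e, he, h0, rfl⟩)
    · exact Set.mem_iUnion.mpr ⟨0, hw⟩
    · exact Set.mem_iUnion.mpr ⟨n + 1, path_mem_wseq n e he h0⟩
  · rintro hw
    obtain ⟨n, hn⟩ := Set.mem_iUnion.mp hw
    exact wseq_subset_hset n hn

lemma wseq_open (hd : IsLocalHomeomorph d) (hr : Continuous r) (hV : IsOpen V) :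
    ∀ n, IsOpen (WSeq d r V n)
  | 0 => hV
  | n + 1 => hd.isOpenMap _ ((wseq_open hd hr hV n).preimage hr)

lemma hset_open (hd : IsLocalHomeomorph d) (hr : Continuous r) (hV : IsOpen V) :
    IsOpen (HSet d r V) := by
  rw [hset_eq_iUnion]
  exact isOpen_iUnion (wseq_open hd hr hV)

lemma finset_open : IsOpen (FinSet r) := by
  rw [isOpen_iff_mem_nhds]
  rintro v ⟨W, hW, hK⟩
  filter_upwards [interior_mem_nhds.mpr hW] with v' hv'
  exact ⟨W, mem_nhds_iff.mpr ⟨interior W, interior_subset, isOpen_interior, hv'⟩, hK⟩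

lemma rg_open : IsOpen (Rg r) := finset_open.sdiff isClosed_closure

lemma rg_nbhd [T2Space E0] (hd : IsLocalHomeomorph d) (hr : Continuous r) {v : E0}
    (hv : v ∈ Rg r) {U : Set E0} (hU : IsOpen U) (hsub : d '' (r ⁻¹' {v}) ⊆ U) :
    ∃ N : Set E0, IsOpen N ∧ v ∈ N ∧ ∀ v' ∈ N, v' ∈ Rg r ∧ d '' (r ⁻¹' {v'}) ⊆ U := by
  obtain ⟨V₀, hV₀, hK⟩ := hv.1
  have hC : IsCompact ((r ⁻¹' V₀) \ (d ⁻¹' U)) := hK.diff (hU.preimage hd.continuous)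
  have hrC : IsCompact (r '' ((r ⁻¹' V₀) \ (d ⁻¹' U))) := hC.image hr
  have hvC : v ∉ r '' ((r ⁻¹' V₀) \ (d ⁻¹' U)) := by
    rintro ⟨f, ⟨hfV, hfU⟩, rfl⟩
    exact hfU (hsub ⟨f, rfl, rfl⟩)
  refine ⟨interior V₀ ∩ (r '' ((r ⁻¹' V₀) \ (d ⁻¹' U)))ᶜ ∩ Rg r,
    ((isOpen_interior.inter hrC.isClosed.isOpen_compl).inter rg_open), 
    ⟨⟨mem_interior_iff_mem_nhds.mpr hV₀, hvC⟩, hv⟩, ?_⟩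
  rintro v' ⟨⟨hv'1, hv'2⟩, hv'3⟩
  refine ⟨hv'3, ?_⟩
  rintro w ⟨f, hf, rfl⟩
  have hrf : r f = v' := hf
  by_cases hfU : d f ∈ U
  · exact hfU
  · exact absurd ⟨f, ⟨by simp only [Set.mem_preimage, hrf]; exact interior_subset hv'1, hfU⟩, hrf⟩ hv'2

lemma satSeq_mono : Monotone (SatSeq d r V) :=
  monotone_nat_of_le_succ fun _ => Set.subset_union_left

lemma satSeq_open [T2Space E0] (hd : IsLocalHomeomorph d) (hr : Continuous r)
    (hV : IsOpen V) : ∀ k, IsOpen (SatSeq d r V k) := by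
  intro k
  induction k with
  | zero => exact hV
  | succ k ih =>
    rw [isOpen_iff_mem_nhds]
    rintro v (hv | ⟨hvr, hvs⟩)
    · exact Filter.mem_of_superset (ih.mem_nhds hv) Set.subset_union_left
    · obtain ⟨N, hNo, hvN, hN⟩ := rg_nbhd hd hr hvr ih hvs
      refine Filter.mem_of_superset (hNo.mem_nhds hvN) ?_
      intro v' hv'
      exact Or.inr ⟨(hN v' hv').1, (hN v' hv').2⟩

lemma satset_extend (f : E1) :
    ∀ k, r f ∈ SatSeq d r (HSet d r V) k → d f ∈ SatSet d r (HSet d r V) := by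
  intro k
  induction k with
  | zero =>
    intro h
    exact Set.mem_iUnion.mpr ⟨0, hset_extend h f rfl⟩
  | succ k ih =>
    rintro (h | ⟨_, hsub⟩)
    · exact ih h
    · exact Set.mem_iUnion.mpr ⟨k, hsub ⟨f, rfl, rfl⟩⟩

lemma fiber_compact [T2Space E0] (hr : Continuous r) {v : E0} (hv : v ∈ FinSet r) :
    IsCompact (r ⁻¹' {v}) := by
  obtain ⟨V₀, hV₀, hK⟩ := hv
  refine hK.of_isClosed_subset (isClosed_singleton.preimage hr) ?_
  intro f hf
  have : r f = v := hf
  simpa [this] using mem_of_mem_nhds hV₀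

lemma path_start {X : Set E0} (hX : PosInv d r X) :
    ∀ n (e : Fin (n + 1) → E1), IsPath d r e → d (e (Fin.last n)) ∈ X → r (e 0) ∈ X := by
  intro n
  induction n with
  | zero => intro e _ h; exact hX (e 0) h
  | succ n ih =>
    intro e he hl
    have h1 : r (e (Fin.last n).succ) ∈ X := by rw [Fin.succ_last]; exact hX _ hl
    have h2 : d ((e ∘ Fin.castSucc) (Fin.last n)) ∈ X := by
      have := he (Fin.last n)
      simpa [Function.comp, this] using h1
    have h3 := ih (e ∘ Fin.castSucc) (isPath_castSucc he) h2
    simpa using h3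

end Aux

theorem stmt14 [LocallyCompactSpace E0] [T2Space E0] [LocallyCompactSpace E1] [T2Space E1]
    (d r : E1 → E0) (hd : IsLocalHomeomorph d) (hr : Continuous r)
    (V : Set E0) (hV : IsOpen V) :
    IsClosed (SatSet d r (HSet d r V))ᶜ ∧
    Invariant d r (SatSet d r (HSet d r V))ᶜ ∧
    (SatSet d r (HSet d r V))ᶜ ∩ V = ∅ ∧
    (∀ X : Set E0, Invariant d r X → X ∩ V = ∅ →
      X ⊆ (SatSet d r (HSet d r V))ᶜ) := by
  have hHopen : IsOpen (HSet d r V) := hset_open hd hr hV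
  have hseqopen := satSeq_open hd hr hHopen
  have hSopen : IsOpen (SatSet d r (HSet d r V)) := isOpen_iUnion hseqopen
  refine ⟨hSopen.isClosed_compl, ⟨?_, ?_⟩, ?_, ?_⟩
  · -- PosInv of complement
    intro e hde hre
    obtain ⟨k, hk⟩ := Set.mem_iUnion.mp hre
    exact hde (satset_extend e k hk)
  · -- NegInv of complement
    rintro v ⟨hvS, hvr⟩
    by_contra hcon
    push_neg at hcon
    have hall : ∀ f : E1, r f = v → d f ∈ SatSet d r (HSet d r V) := by
      intro f hf
      by_contra h
      exact h (by simpa using hcon f hf h)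
    have hcov : r ⁻¹' {v} ⊆ ⋃ k, d ⁻¹' (SatSeq d r (HSet d r V) k) := by
      intro f hf
      have := hall f hf
      obtain ⟨k, hk⟩ := Set.mem_iUnion.mp this
      exact Set.mem_iUnion.mpr ⟨k, hk⟩
    obtain ⟨t, ht⟩ := (fiber_compact hr hvr.1).elim_finite_subcover
      (fun k => d ⁻¹' (SatSeq d r (HSet d r V) k))
      (fun k => (hseqopen k).preimage hd.continuous) hcov
    have hk : r ⁻¹' {v} ⊆ d ⁻¹' (SatSeq d r (HSet d r V) (t.sup id)) := by
      intro f hf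
      obtain ⟨k, hkt, hfk⟩ := Set.mem_iUnion₂.mp (ht hf)
      exact satSeq_mono (Finset.le_sup (f := id) hkt) hfk
    have : v ∈ SatSeq d r (HSet d r V) (t.sup id + 1) := by
      refine Or.inr ⟨hvr, ?_⟩
      rintro w ⟨f, hf, rfl⟩
      exact hk hf
    exact hvS (Set.mem_iUnion.mpr ⟨t.sup id + 1, this⟩)
  · -- disjoint from V
    rw [Set.eq_empty_iff_forall_notMem]
    rintro x ⟨hxS, hxV⟩
    exact hxS (Set.mem_iUnion.mpr ⟨0, Or.inl hxV⟩)
  · -- maximality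
    rintro X ⟨hpos, hneg⟩ hdisj x hx hxS
    have key : ∀ k, ∀ y ∈ X, y ∉ SatSeq d r (HSet d r V) k := by
      intro k
      induction k with
      | zero =>
        rintro y hy (hyV | ⟨n, e, he, h0, hl⟩)
        · exact Set.eq_empty_iff_forall_notMem.mp hdisj y ⟨hy, hyV⟩
        · have : d (e (Fin.last n)) ∈ X := hl ▸ hy
          have h1 := path_start hpos n e he this
          exact Set.eq_empty_iff_forall_notMem.mp hdisj _ ⟨h1, h0⟩
      | succ k ih =>
        rintro y hy (hyk | ⟨hyr, hsub⟩)
        · exact ih y hy hyk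
        · obtain ⟨f, hrf, hdf⟩ := hneg y ⟨hy, hyr⟩
          exact ih (d f) hdf (hsub ⟨f, hrf, rfl⟩)
    obtain ⟨k, hk⟩ := Set.mem_iUnion.mp hxS
    exact key k x hx hk
end
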